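/- Under the COCOB wealth bound, combining with the telescoping inequality ∑_{j=1}^T |g_j|/(G_{j-1}+L) ≤ ∑_{j=1}^T |g_j|/G_j ≤ ln(G_T/L) gives Wealth_T ≥ L·exp(θ_T²/(2L(G_T+L)) − (1/2)·ln(G_T/L)) = L·√(L/G_T)·exp(θ_T²/(2L(G_T+L))). -/

import Mathlib

/-!
Along the run, track the potential
`Φ(θ, G) = θ² / (2L(G + L)) + θ² / (2(G + L)²) + log (L / G) / 2`, which vanishes at the start.
With `x = θ / (G + L)` and `c = g / L`, a round multiplies the wealth by `1 + c tanh x`, and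
convexity of `exp` together with `log cosh x ≤ x² / 2` gives `1 + c tanh x ≥ exp (c x - |c| x² / 2)`.
This dominates `exp` of the increase of `Φ`: the quadratic part grows by at most
`c x - |c| x² / 2 + |g| / (2(G + L))`, and the logarithm drops by at least `|g| / (2(G + L))`
because `log (G / (G + |g|)) ≤ -|g| / (G + |g|)` and `|g| ≤ L`. Hence `W_T ≥ L exp Φ_T`, and
dropping the nonnegative middle term of `Φ_T` gives the bound.
-/

open Real Finset

lemma Real.two_mul_sigmoid_two_mul_sub_one (x : ℝ) : 2 * sigmoid (2 * x) - 1 = tanh x := by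
  have hexp : exp (-(2 * x)) = exp (-x) * exp (-x) := by rw [← exp_add]; ring_nf
  have hinv : exp x * exp (-x) = 1 := by rw [← exp_add]; simp
  rw [sigmoid_def, tanh_eq, hexp]
  field_simp
  linear_combination (-2 * exp (-x)) * hinv

lemma Real.one_add_tanh (x : ℝ) : 1 + tanh x = exp (x - log (cosh x)) := by
  rw [exp_sub, exp_log (cosh_pos x), tanh_eq_sinh_div_cosh, ← cosh_add_sinh]
  field_simp [(cosh_pos x).ne']

lemma Real.exp_mul_le_one_add_mul_exp_sub_one {c : ℝ} (hc₀ : 0 ≤ c) (hc₁ : c ≤ 1) (y : ℝ) :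
    exp (c * y) ≤ 1 + c * (exp y - 1) := by
  have h := convexOn_exp.2 (Set.mem_univ 0) (Set.mem_univ y) (sub_nonneg.2 hc₁) hc₀
    (sub_add_cancel 1 c)
  simp only [smul_eq_mul, mul_zero, zero_add, exp_zero, mul_one] at h
  linarith

lemma Real.exp_mul_sub_abs_mul_sq_le_one_add_mul_tanh {c : ℝ} (hc : |c| ≤ 1) (x : ℝ) :
    exp (c * x - |c| * x ^ 2 / 2) ≤ 1 + c * tanh x := by
  suffices key : ∀ c x : ℝ, 0 ≤ c → c ≤ 1 → exp (c * x - c * x ^ 2 / 2) ≤ 1 + c * tanh x by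
    rcases le_total 0 c with hc₀ | hc₀
    · rw [abs_of_nonneg hc₀]
      exact key c x hc₀ (abs_le.1 hc).2
    · have h := key (-c) (-x) (neg_nonneg.2 hc₀) (neg_le.1 (abs_le.1 hc).1)
      rw [abs_of_nonpos hc₀]
      rw [tanh_neg] at h
      convert h using 2 <;> ring
  intro c x hc₀ hc₁
  have hlog : log (cosh x) ≤ x ^ 2 / 2 :=
    (log_le_iff_le_exp (cosh_pos x)).2 (cosh_le_exp_half_sq x)
  calc exp (c * x - c * x ^ 2 / 2) ≤ exp (c * (x - log (cosh x))) :=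
        exp_le_exp.2 (by nlinarith [mul_le_mul_of_nonneg_left hlog hc₀])
    _ ≤ 1 + c * (exp (x - log (cosh x)) - 1) := exp_mul_le_one_add_mul_exp_sub_one hc₀ hc₁ _
    _ = 1 + c * tanh x := by rw [← one_add_tanh]; ring

noncomputable def cocobPotential (L θ G : ℝ) : ℝ :=
  θ ^ 2 / (2 * L * (G + L)) + θ ^ 2 / (2 * (G + L) ^ 2) + log (L / G) / 2

lemma cocob_quadratic_step_of_nonneg {L G θ v : ℝ} (hL : 0 < L) (hv₀ : 0 ≤ v) (hvL : v ≤ L)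
    (hG : 0 < G + L) :
    (θ + v) ^ 2 / (2 * L * (G + v + L)) + (θ + v) ^ 2 / (2 * (G + v + L) ^ 2)
        - (θ ^ 2 / (2 * L * (G + L)) + θ ^ 2 / (2 * (G + L) ^ 2)) ≤
      v / L * (θ / (G + L)) - v / L * (θ / (G + L)) ^ 2 / 2 + v / (2 * (G + L)) := by
  set a := G + L
  rw [show G + v + L = a + v by ring]
  have hav : 0 < a + v := by linarith
  -- Cleared of denominators the claim is `v (A θ² + B θ + C) ≥ 0`, a quadratic in `θ` with
  -- `A > 0` and discriminant `B² - 4AC = -4aL(L - v)(a + v)³ ≤ 0`.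
  set A := a * (2 * L - v) + v * (L - v)
  set B := -2 * L * (a + v) ^ 2 + 2 * v * (a ^ 2 + a * v + 2 * a * L + L * v)
  set C := L * a * (a + v) ^ 2 - v * (a + L) * (a + v) ^ 2
    + v ^ 2 * (a ^ 2 + a * v + 2 * a * L + L * v)
  have hA : 0 < A := by
    have : 0 < 2 * L - v := by linarith
    have : 0 ≤ L - v := by linarith
    positivity
  have hquad : 0 ≤ A * θ ^ 2 + B * θ + C := by
    have hsq : A * (A * θ ^ 2 + B * θ + C)
        = (A * θ + B / 2) ^ 2 + a * L * (L - v) * (a + v) ^ 3 := by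
      ring
    have : 0 ≤ A * (A * θ ^ 2 + B * θ + C) := by
      rw [hsq]; have := sub_nonneg.2 hvL; positivity
    exact (mul_nonneg_iff_of_pos_left hA).1 this
  rw [← sub_nonneg]
  have hid : v / L * (θ / a) - v / L * (θ / a) ^ 2 / 2 + v / (2 * a)
      - ((θ + v) ^ 2 / (2 * L * (a + v)) + (θ + v) ^ 2 / (2 * (a + v) ^ 2)
        - (θ ^ 2 / (2 * L * a) + θ ^ 2 / (2 * a ^ 2))) =
      v * (A * θ ^ 2 + B * θ + C) / (2 * L * a ^ 2 * (a + v) ^ 2) := by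
    field_simp
    ring
  rw [hid]
  positivity

lemma cocob_quadratic_step {L G θ g : ℝ} (hL : 0 < L) (hg : |g| ≤ L) (hG : 0 < G + L) :
    (θ + g) ^ 2 / (2 * L * (G + |g| + L)) + (θ + g) ^ 2 / (2 * (G + |g| + L) ^ 2)
        - (θ ^ 2 / (2 * L * (G + L)) + θ ^ 2 / (2 * (G + L) ^ 2)) ≤
      g / L * (θ / (G + L)) - |g| / L * (θ / (G + L)) ^ 2 / 2 + |g| / (2 * (G + L)) := by
  rcases le_total 0 g with hg₀ | hg₀
  · rw [abs_of_nonneg hg₀] at hg ⊢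
    exact cocob_quadratic_step_of_nonneg hL hg₀ hg hG
  · rw [abs_of_nonpos hg₀] at hg ⊢
    have h := cocob_quadratic_step_of_nonneg (θ := -θ) hL (neg_nonneg.2 hg₀) hg hG
    convert h using 2 <;> ring

lemma cocobPotential_add_sub_le {L G θ g : ℝ} (hL : 0 < L) (hg : |g| ≤ L) (hG : 0 < G) :
    cocobPotential L (θ + g) (G + |g|) - cocobPotential L θ G ≤
      g / L * (θ / (G + L)) - |g| / L * (θ / (G + L)) ^ 2 / 2 := by
  have hGg : 0 < G + |g| := by positivity
  have hlog : log (L / (G + |g|)) - log (L / G) ≤ -(|g| / (G + L)) :=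
    calc log (L / (G + |g|)) - log (L / G) = log (G / (G + |g|)) := by
          rw [← log_div (by positivity) (by positivity)]; congr 1; field_simp
      _ ≤ G / (G + |g|) - 1 := log_le_sub_one_of_pos (by positivity)
      _ = -(|g| / (G + |g|)) := by field_simp; ring
      _ ≤ -(|g| / (G + L)) :=
          neg_le_neg (div_le_div_of_nonneg_left (abs_nonneg g) hGg (by linarith))
  have hquad := cocob_quadratic_step (θ := θ) hL hg (by linarith : 0 < G + L)
  unfold cocobPotential
  have : |g| / (2 * (G + L)) = |g| / (G + L) / 2 := by rw [div_div, mul_comm (G + L)]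
  linarith

lemma exp_cocobPotential_add_sub_le {L G θ g : ℝ} (hL : 0 < L) (hg : |g| ≤ L) (hG : 0 < G) :
    exp (cocobPotential L (θ + g) (G + |g|) - cocobPotential L θ G) ≤
      1 + 1 / L * (2 * sigmoid (2 * (θ / (G + L))) - 1) * g := by
  have hc : |g / L| ≤ 1 := by rwa [abs_div, abs_of_pos hL, div_le_one hL]
  calc exp (cocobPotential L (θ + g) (G + |g|) - cocobPotential L θ G)
      ≤ exp (g / L * (θ / (G + L)) - |g / L| * (θ / (G + L)) ^ 2 / 2) := by
        rw [abs_div, abs_of_pos hL]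
        exact exp_le_exp.2 (cocobPotential_add_sub_le hL hg hG)
    _ ≤ 1 + g / L * tanh (θ / (G + L)) := exp_mul_sub_abs_mul_sq_le_one_add_mul_tanh hc _
    _ = 1 + 1 / L * (2 * sigmoid (2 * (θ / (G + L))) - 1) * g := by
        rw [two_mul_sigmoid_two_mul_sub_one]; ring

lemma sqrt_mul_exp_le_exp_cocobPotential {L G : ℝ} (hL : 0 < L) (hG : 0 < G) (θ : ℝ) :
    √(L / G) * exp (θ ^ 2 / (2 * L * (G + L))) ≤ exp (cocobPotential L θ G) := by
  have hsqrt : √(L / G) = exp (log (L / G) / 2) := by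
    rw [sqrt_eq_rpow, rpow_def_of_pos (by positivity)]; ring_nf
  rw [hsqrt, ← exp_add, cocobPotential, exp_le_exp]
  have : 0 ≤ θ ^ 2 / (2 * (G + L) ^ 2) := by positivity
  linarith

lemma cocob_wealth_ge_exp_cocobPotential (L : ℝ) (hL : 0 < L)
    (g : ℕ → ℝ) (hg : ∀ t, |g t| ≤ L)
    (θ G : ℕ → ℝ)
    (hθ : ∀ t, θ t = ∑ j ∈ Icc 1 t, g j)
    (hG : ∀ t, G t = L + ∑ j ∈ Icc 1 t, |g j|)
    (β : ℕ → ℝ)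
    (hβ : ∀ t, β t = (1 / L) *
      (2 * (1 / (1 + exp (-(2 * θ (t - 1) / (G (t - 1) + L))))) - 1))
    (W : ℕ → ℝ)
    (hW : ∀ T, W T = L * ∏ t ∈ Icc 1 T, (1 + β t * g t)) (n : ℕ) :
    L * exp (cocobPotential L (θ n) (G n)) ≤ W n := by
  induction n with
  | zero => simp [hθ, hG, hW, cocobPotential]
  | succ n ih =>
    have hθ_succ : θ (n + 1) = θ n + g (n + 1) := by
      rw [hθ, hθ, sum_Icc_succ_top (Nat.le_add_left 1 n)]
    have hG_succ : G (n + 1) = G n + |g (n + 1)| := by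
      rw [hG, hG, sum_Icc_succ_top (Nat.le_add_left 1 n), add_assoc]
    have hW_succ : W (n + 1) = W n * (1 + β (n + 1) * g (n + 1)) := by
      rw [hW, hW, prod_Icc_succ_top (Nat.le_add_left 1 n), mul_assoc]
    have hβ_succ : β (n + 1) = 1 / L * (2 * sigmoid (2 * (θ n / (G n + L))) - 1) := by
      rw [hβ, sigmoid_def, mul_div_assoc, one_div]; simp
    have hGn : 0 < G n :=
      hG n ▸ add_pos_of_pos_of_nonneg hL (sum_nonneg fun j _ => abs_nonneg (g j))
    have hstep := exp_cocobPotential_add_sub_le (θ := θ n) hL (hg (n + 1)) hGn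
    rw [← hθ_succ, ← hG_succ, ← hβ_succ] at hstep
    calc L * exp (cocobPotential L (θ (n + 1)) (G (n + 1)))
        = L * exp (cocobPotential L (θ n) (G n)) *
            exp (cocobPotential L (θ (n + 1)) (G (n + 1)) - cocobPotential L (θ n) (G n)) := by
          rw [mul_assoc, ← exp_add, add_sub_cancel]
      _ ≤ W n * (1 + β (n + 1) * g (n + 1)) :=
          mul_le_mul ih hstep (exp_pos _).le (le_trans (by positivity) ih)
      _ = W (n + 1) := hW_succ.symm

theorem cocob_wealth_sqrt_bound (L : ℝ) (hL : 0 < L)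
    (g : ℕ → ℝ) (hg : ∀ t, |g t| ≤ L)
    (θ G : ℕ → ℝ)
    (hθ : ∀ t, θ t = ∑ j ∈ Finset.Icc 1 t, g j)
    (hG : ∀ t, G t = L + ∑ j ∈ Finset.Icc 1 t, |g j|)
    (β : ℕ → ℝ)
    (hβ : ∀ t, β t = (1 / L) *
      (2 * (1 / (1 + Real.exp (-(2 * θ (t - 1) / (G (t - 1) + L))))) - 1))
    (W : ℕ → ℝ)
    (hW : ∀ T, W T = L * ∏ t ∈ Finset.Icc 1 T, (1 + β t * g t))
    (T : ℕ) :
    W T ≥ L * Real.sqrt (L / G T) *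
      Real.exp (θ T ^ 2 / (2 * L * (G T + L))) := by
  have hGT : 0 < G T :=
    hG T ▸ add_pos_of_pos_of_nonneg hL (sum_nonneg fun j _ => abs_nonneg (g j))
  calc L * √(L / G T) * exp (θ T ^ 2 / (2 * L * (G T + L)))
      ≤ L * exp (cocobPotential L (θ T) (G T)) := by
        rw [mul_assoc]
        exact mul_le_mul_of_nonneg_left (sqrt_mul_exp_le_exp_cocobPotential hL hGT _) hL.le
    _ ≤ W T := cocob_wealth_ge_exp_cocobPotential L hL g hg θ G hθ hG β hβ W hW T
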